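/- Let Ψ : (0,∞) → ℝ be concave, and suppose Ψ(x) = -(2/(3π²)) x³ + r(x) with r(x) = o(x³) as x → ∞. Then for every ρ > 0 there exists x₀ such that for all x ≥ x₀ and all t ∈ (0,1], |Ψ(x - t) - Ψ(x) - (2t/π²) x²| ≤ ρ t x². -/

import Mathlib

open Filter Asymptotics

/-!
With `c = 2 / (3π²)`: by concavity, the slope of `Ψ` on `[x - t, x]` lies between its slopes
on the chords `[x, (1 + ε) x]` and `[(1 - 2ε) x, (1 - ε) x]`. On a chord of length `ε x` inside
`[x/2, 2x]` the `o(x³)` error term moves the slope by `o(x²) / ε`, while the slope of `-c y³`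
there is `-3 c x² + O(ε x²)`. Choosing `ε` small and then `x` large, the slope on `[x - t, x]`
is `-3 c x² + o(x²)` uniformly in `t ∈ (0, 1]`; and `Ψ (x - t) - Ψ x` is `-t` times
that slope.
-/

theorem ConcaveOn.slope_le_slope_of_le {s : Set ℝ} {f : ℝ → ℝ} (hf : ConcaveOn ℝ s f)
    {a b c d : ℝ} (ha : a ∈ s) (hd : d ∈ s) (hab : a < b) (hbc : b ≤ c) (hcd : c < d) :
    slope f c d ≤ slope f a b := by
  have hac : a < c := hab.trans_le hbc
  have hc : c ∈ s := hf.1.ordConnected.out ha hd ⟨hac.le, hcd.le⟩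
  have hb : b ∈ s := hf.1.ordConnected.out ha hd ⟨hab.le, hbc.trans hcd.le⟩
  calc slope f c d ≤ slope f c a :=
        hf.slope_anti hc (Set.mem_sdiff_singleton.2 ⟨ha, hac.ne⟩)
          (Set.mem_sdiff_singleton.2 ⟨hd, hcd.ne'⟩) (hac.trans hcd).le
    _ = slope f a c := slope_comm f c a
    _ ≤ slope f a b :=
        hf.slope_anti ha (Set.mem_sdiff_singleton.2 ⟨hb, hab.ne'⟩)
          (Set.mem_sdiff_singleton.2 ⟨hc, hac.ne'⟩) hbc

theorem abs_slope_add_three_mul_sq_le {f : ℝ → ℝ} {c δ K u v x : ℝ} (huv : u < v)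
    (hu : |f u + c * u ^ 3| ≤ δ) (hv : |f v + c * v ^ 3| ≤ δ)
    (hK : |u ^ 2 + u * v + v ^ 2 - 3 * x ^ 2| ≤ K) :
    |slope f u v + 3 * c * x ^ 2| ≤ 2 * δ / (v - u) + |c| * K := by
  have hvu : 0 < v - u := sub_pos.2 huv
  set P := u ^ 2 + u * v + v ^ 2
  have hcube : |slope f u v + c * P| ≤ 2 * δ / (v - u) := by
    rw [show slope f u v + c * P = ((f v + c * v ^ 3) - (f u + c * u ^ 3)) / (v - u) by
          rw [slope_def_field]; field_simp; ring,
      abs_div, abs_of_pos hvu]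
    gcongr
    exact (abs_sub _ _).trans (by linarith)
  calc |slope f u v + 3 * c * x ^ 2| = |(slope f u v + c * P) - c * (P - 3 * x ^ 2)| := by
        ring_nf
    _ ≤ |slope f u v + c * P| + |c * (P - 3 * x ^ 2)| := abs_sub _ _
    _ ≤ 2 * δ / (v - u) + |c| * K := by rw [abs_mul]; gcongr

theorem ConcaveOn.abs_slope_add_le_of_abs_add_cube_le {Ψ : ℝ → ℝ} {c ρ ε x t : ℝ}
    (hconc : ConcaveOn ℝ (Set.Ioi 0) Ψ) (hε : 0 < ε) (hε4 : ε ≤ 1 / 4)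
    (hcε : 18 * |c| * ε ≤ ρ) (hεx : 1 ≤ ε * x) (ht : t ∈ Set.Ioc (0:ℝ) 1)
    (hbound : ∀ y ∈ Set.Icc (x / 2) (2 * x), |Ψ y + c * y ^ 3| ≤ ρ * ε / 4 * x ^ 3) :
    |slope Ψ (x - t) x + 3 * c * x ^ 2| ≤ ρ * x ^ 2 := by
  obtain ⟨ht, ht1⟩ := ht
  have hx : 0 < x := by nlinarith
  have hchord : ∀ u, x / 2 ≤ u → u + ε * x ≤ 2 * x →
      |u ^ 2 + u * (u + ε * x) + (u + ε * x) ^ 2 - 3 * x ^ 2| ≤ 9 * ε * x ^ 2 →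
      |slope Ψ u (u + ε * x) + 3 * c * x ^ 2| ≤ ρ * x ^ 2 := by
    intro u hu hu2 hpoly
    refine (abs_slope_add_three_mul_sq_le (by nlinarith) (hbound u ⟨hu, by nlinarith⟩)
      (hbound _ ⟨by nlinarith, hu2⟩) hpoly).trans ?_
    rw [add_sub_cancel_left, show 2 * (ρ * ε / 4 * x ^ 3) / (ε * x) = ρ / 2 * x ^ 2 by
      field_simp; ring]
    nlinarith [sq_nonneg x]
  have hleft := hchord ((1 - 2 * ε) * x) (by nlinarith) (by nlinarith) (by
    rw [show ((1 - 2 * ε) * x) ^ 2 + (1 - 2 * ε) * x * ((1 - 2 * ε) * x + ε * x)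
        + ((1 - 2 * ε) * x + ε * x) ^ 2 - 3 * x ^ 2 = (7 * ε ^ 2 - 9 * ε) * x ^ 2 by ring,
      abs_mul, abs_of_nonneg (sq_nonneg x)]
    gcongr
    rw [abs_le]; constructor <;> nlinarith)
  have hright := hchord x (by linarith) (by nlinarith) (by
    rw [show x ^ 2 + x * (x + ε * x) + (x + ε * x) ^ 2 - 3 * x ^ 2 = (3 * ε + ε ^ 2) * x ^ 2 by
        ring, abs_mul, abs_of_nonneg (sq_nonneg x)]
    gcongr
    rw [abs_le]; constructor <;> nlinarith)
  have hupper : slope Ψ (x - t) x ≤ slope Ψ ((1 - 2 * ε) * x) ((1 - 2 * ε) * x + ε * x) :=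
    hconc.slope_le_slope_of_le (Set.mem_Ioi.2 (by nlinarith)) (Set.mem_Ioi.2 hx)
      (by nlinarith) (by nlinarith) (by linarith)
  have hlower : slope Ψ x (x + ε * x) ≤ slope Ψ (x - t) x :=
    hconc.slope_le_slope_of_le (Set.mem_Ioi.2 (by nlinarith)) (Set.mem_Ioi.2 (by nlinarith))
      (by linarith) le_rfl (by nlinarith)
  rw [abs_le] at hleft hright ⊢
  constructor <;> linarith [hleft.1, hleft.2, hright.1, hright.2]

theorem ConcaveOn.eventually_abs_slope_add_le_of_isLittleO_cube {Ψ : ℝ → ℝ} {c : ℝ}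
    (hconc : ConcaveOn ℝ (Set.Ioi 0) Ψ)
    (hr : (fun x : ℝ => Ψ x + c * x ^ 3) =o[atTop] fun x : ℝ => x ^ 3)
    {ρ : ℝ} (hρ : 0 < ρ) :
    ∀ᶠ x in atTop, ∀ t ∈ Set.Ioc (0:ℝ) 1,
      |slope Ψ (x - t) x + 3 * c * x ^ 2| ≤ ρ * x ^ 2 := by
  set ε := min (1 / 4) (ρ / (18 * (|c| + 1)))
  have hε : 0 < ε := lt_min (by norm_num) (by positivity)
  have hcε : 18 * |c| * ε ≤ ρ := by
    have : ε * (18 * (|c| + 1)) ≤ ρ := (le_div_iff₀ (by positivity)).1 (min_le_right _ _)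
    nlinarith
  obtain ⟨X, hX⟩ := (hr.def (by positivity : 0 < ρ * ε / 32)).exists_forall_of_atTop
  filter_upwards [eventually_ge_atTop (2 * X), eventually_ge_atTop ε⁻¹,
    eventually_gt_atTop 0] with x hxX hxε hx t ht
  refine hconc.abs_slope_add_le_of_abs_add_cube_le hε (min_le_left _ _) hcε
    (by rw [inv_le_iff_one_le_mul₀ hε] at hxε; linarith) ht fun y ⟨hy, hy2⟩ => ?_
  have hy0 : 0 < y := by linarith
  have hXy := hX y (by linarith)
  rw [Real.norm_eq_abs, Real.norm_of_nonneg (by positivity)] at hXy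
  calc |Ψ y + c * y ^ 3| ≤ ρ * ε / 32 * y ^ 3 := hXy
    _ ≤ ρ * ε / 32 * (2 * x) ^ 3 := by gcongr
    _ = ρ * ε / 4 * x ^ 3 := by ring

/-- If `Ψ` is concave on `(0,∞)` and
`Ψ(x) = -(2/(3π²)) x³ + o(x³)` as `x → ∞`, then for every `ρ > 0` there is `x₀`
such that for all `x ≥ x₀` and `t ∈ (0,1]`,
`|Ψ(x-t) - Ψ(x) - (2t/π²) x²| ≤ ρ t x²`. -/
theorem stmt10 (Ψ : ℝ → ℝ) (hconc : ConcaveOn ℝ (Set.Ioi 0) Ψ)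
    (hr : (fun x : ℝ => Ψ x + 2 / (3 * Real.pi ^ 2) * x ^ 3) =o[atTop]
      fun x : ℝ => x ^ 3) :
    ∀ ρ > (0:ℝ), ∃ x₀ : ℝ, ∀ x ≥ x₀, ∀ t ∈ Set.Ioc (0:ℝ) 1,
      |Ψ (x - t) - Ψ x - 2 * t / Real.pi ^ 2 * x ^ 2| ≤ ρ * t * x ^ 2 := by
  intro ρ hρ
  obtain ⟨x₀, hx₀⟩ :=
    (hconc.eventually_abs_slope_add_le_of_isLittleO_cube hr hρ).exists_forall_of_atTop
  refine ⟨x₀, fun x hx t ht => ?_⟩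
  have hdiff : Ψ (x - t) - Ψ x - 2 * t / Real.pi ^ 2 * x ^ 2 =
      -t * (slope Ψ (x - t) x + 3 * (2 / (3 * Real.pi ^ 2)) * x ^ 2) := by
    rw [slope_def_field, sub_sub_cancel]
    field_simp [ht.1.ne']
    ring
  rw [hdiff, abs_mul, abs_neg, abs_of_pos ht.1]
  nlinarith [mul_le_mul_of_nonneg_left (hx₀ x hx t ht) ht.1.le]
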